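/- In the odd nilHecke algebra ONH_n, the standard monomials x_1^{t_1}⋯x_n^{t_n} τ_w (t_i ∈ Z_{≥0}, w ∈ S_n, with τ_w defined via a fixed reduced expression for each w) form a k-basis; consequently dim_k of the degree-truncated quotient ONH_n^ℓ = ONH_n/⟨x_1^ℓ⟩ satisfies dim_k ONH_n^ℓ ≤ n! · Π_{i=0}^{n-1}(ℓ - i) whenever the spanning set {x_1^{k_1}⋯x_n^{k_n}τ_w : 0 ≤ k_i ≤ ℓ - i, w ∈ S_n} spans ONH_n^ℓ. Prove the spanning claim: every element x_1^{t_1}⋯x_m^{t_m} τ_w of ONH_n^ℓ lies in the k-span of {x_1^{k_1}⋯x_m^{k_m}τ_v : v ∈ S_n, 0 ≤ k_i ≤ ℓ - i for i ≤ m}, given the rewriting relations x_m^{ℓ-(m-1)} = h_m·1 + Σ_{v≠1} f_{m,v}τ_v with h_m a skew polynomial in x_m of degree ≤ ℓ - m (coefficients in SkPol_{m-1}) and f_{m,v} ∈ SkPol_m, together with τ_vτ_w ∈ {0, ±τ_{vw}} and ℓ(vw) > ℓ(w) when the product is nonzero and v ≠ 1. -/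

import Mathlib

/-!
Anticommuting generators multiply monomials only up to sign, so a product of ordered monomials is
`±` the ordered monomial of the summed exponents, and the subalgebra generated by some of the `x i`
is spanned by the ordered monomials in those variables. Induct upward on the first position `m`
from which the exponents are restricted. To restrict `x_m` as well, rewrite `x_m^{ℓ-m}` by the
given relation: the `c`-terms lower the exponent of `x_m` and leave the exponents above `m`
unchanged (their coefficients involve only `x_j`, `j < m`), while the `f`-terms replace `τ_w` by
`0` or `±τ_{w'}` with `w'` strictly longer. A downward induction on the length of `w` (bounded,
since there are finitely many permutations) and an upward induction on the exponent of `x_m` close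
the argument.
-/

section Sign

variable {A : Type*} [Ring A] {a b c : A}

def EqUpToSign (a b : A) : Prop := a = b ∨ a = -b

infix:50 " =± " => EqUpToSign

namespace EqUpToSign

@[refl] theorem refl (a : A) : a =± a := Or.inl rfl

theorem neg_right (a : A) : a =± -a := Or.inr (neg_neg a).symm

theorem symm (h : a =± b) : b =± a := by
  rcases h with rfl | rfl
  · exact refl _
  · exact neg_right _

theorem trans (h₁ : a =± b) (h₂ : b =± c) : a =± c := by
  rcases h₁ with rfl | rfl <;> rcases h₂ with rfl | rfl <;> simp [EqUpToSign]

theorem mul_left (h : a =± b) (c : A) : c * a =± c * b := by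
  rcases h with rfl | rfl
  exacts [refl _, Or.inr (mul_neg c b)]

theorem mul_right (h : a =± b) (c : A) : a * c =± b * c := by
  rcases h with rfl | rfl
  exacts [refl _, Or.inr (neg_mul b c)]

theorem mem_iff {S : Type*} [SetLike S A] [NegMemClass S A] {s : S} (h : a =± b) :
    a ∈ s ↔ b ∈ s := by
  rcases h with rfl | rfl
  exacts [Iff.rfl, neg_mem_iff]

instance : @Trans A A A EqUpToSign EqUpToSign EqUpToSign := ⟨trans⟩

end EqUpToSign

def SignCommute (a b : A) : Prop := a * b =± b * a

namespace SignCommute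

theorem of_anticomm (h : a * b = -(b * a)) : SignCommute a b := Or.inr h

theorem one_right (a : A) : SignCommute a 1 := by
  simp only [SignCommute, mul_one, one_mul]; rfl

theorem symm (h : SignCommute a b) : SignCommute b a := EqUpToSign.symm h

theorem mul_right (hb : SignCommute a b) (hc : SignCommute a c) : SignCommute a (b * c) := by
  have h₁ : a * (b * c) =± b * a * c := by
    rw [← mul_assoc]; exact EqUpToSign.mul_right hb c
  have h₂ : b * a * c =± b * c * a := by
    rw [mul_assoc, mul_assoc]; exact EqUpToSign.mul_left hc b
  exact h₁.trans h₂

theorem pow_right (h : SignCommute a b) (t : ℕ) : SignCommute a (b ^ t) := by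
  induction t with
  | zero => rw [pow_zero]; exact one_right a
  | succ t ih => rw [pow_succ]; exact ih.mul_right h

theorem pow_left (h : SignCommute a b) (s : ℕ) : SignCommute (a ^ s) b :=
  (h.symm.pow_right s).symm

theorem list_prod_right {l : List A} (h : ∀ b ∈ l, SignCommute a b) :
    SignCommute a l.prod := by
  induction l with
  | nil => exact one_right a
  | cons b l ih =>
    rw [List.prod_cons]
    exact (h b List.mem_cons_self).mul_right (ih fun c hc => h c (List.mem_cons_of_mem b hc))

end SignCommute

end Sign

section Monomial

variable {A : Type*} [Ring A] {n : ℕ}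

def orderedMonomial (x : Fin n → A) (k : Fin n → ℕ) : A := (List.ofFn fun i => x i ^ k i).prod

theorem orderedMonomial_succ (x : Fin (n + 1) → A) (k : Fin (n + 1) → ℕ) :
    orderedMonomial x k =
      x 0 ^ k 0 * orderedMonomial (fun i => x i.succ) (fun i => k i.succ) := by
  rw [orderedMonomial, List.ofFn_succ, List.prod_cons, orderedMonomial]

@[simp] theorem orderedMonomial_zero (x : Fin n → A) : orderedMonomial x 0 = 1 := by
  simp [orderedMonomial]

theorem orderedMonomial_single (x : Fin n → A) (i : Fin n) (c : ℕ) :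
    orderedMonomial x (Pi.single i c) = x i ^ c := by
  induction n with
  | zero => exact i.elim0
  | succ n ih =>
    rw [orderedMonomial_succ]
    cases i using Fin.cases with
    | zero =>
      have : (fun j : Fin n => (Pi.single 0 c : Fin (n + 1) → ℕ) j.succ) = 0 := by
        funext j; simp [Fin.succ_ne_zero]
      rw [this, orderedMonomial_zero, mul_one, Pi.single_eq_same]
    | succ i =>
      have : (fun j : Fin n => (Pi.single i.succ c : Fin (n + 1) → ℕ) j.succ) =
          Pi.single i c := by
        funext j; simp [Pi.single_apply, Fin.succ_inj]
      rw [this, ih, Pi.single_eq_of_ne (Fin.succ_ne_zero i).symm, pow_zero, one_mul]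

theorem orderedMonomial_mul (x : Fin n → A)
    (hanti : ∀ i j, i ≠ j → x i * x j = -(x j * x i))
    (k k' : Fin n → ℕ) :
    orderedMonomial x k * orderedMonomial x k' =± orderedMonomial x (k + k') := by
  induction n with
  | zero => simp [orderedMonomial]; rfl
  | succ n ih =>
    simp only [orderedMonomial_succ x]
    set R := orderedMonomial (fun i => x i.succ) (fun i => k i.succ)
    set R' := orderedMonomial (fun i => x i.succ) (fun i => k' i.succ)
    have hcomm : SignCommute (x 0 ^ k' 0) R :=
      SignCommute.list_prod_right <| by
        simp only [List.forall_mem_ofFn_iff]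
        exact fun j => ((SignCommute.of_anticomm
          (hanti 0 j.succ (Fin.succ_ne_zero j).symm)).pow_left _).pow_right _
    have htail := ih (fun i => x i.succ)
      (fun i j hij => hanti _ _ (Fin.succ_injective n |>.ne hij))
      (fun i => k i.succ) (fun i => k' i.succ)
    calc x 0 ^ k 0 * R * (x 0 ^ k' 0 * R')
        = x 0 ^ k 0 * (R * x 0 ^ k' 0 * R') := by simp only [mul_assoc]
      _ =± x 0 ^ k 0 * (x 0 ^ k' 0 * R * R') := ((EqUpToSign.symm hcomm).mul_right R').mul_left _
      _ = x 0 ^ (k 0 + k' 0) * (R * R') := by rw [pow_add]; simp only [mul_assoc]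
      _ =± _ := htail.mul_left _

theorem mem_span_orderedMonomial_of_mem_adjoin {K : Type*} [CommRing K] [Algebra K A]
    (x : Fin n → A) (hanti : ∀ i j, i ≠ j → x i * x j = -(x j * x i)) (P : Fin n → Prop)
    {z : A} (hz : z ∈ Algebra.adjoin K {a | ∃ i, P i ∧ a = x i}) :
    z ∈ Submodule.span K
      {a | ∃ k : Fin n → ℕ, (∀ i, k i ≠ 0 → P i) ∧ a = orderedMonomial x k} := by
  classical
  set X := {a | ∃ k : Fin n → ℕ, (∀ i, k i ≠ 0 → P i) ∧ a = orderedMonomial x k}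
  have hmul : ∀ a ∈ Submodule.span K X, ∀ b ∈ Submodule.span K X,
      a * b ∈ Submodule.span K X := by
    refine Submodule.mul_le.mp ?_
    rw [Submodule.span_mul_span, Submodule.span_le]
    rintro _ ⟨_, ⟨k, hk, rfl⟩, _, ⟨k', hk', rfl⟩, rfl⟩
    refine (orderedMonomial_mul x hanti k k').mem_iff.mpr
      (Submodule.subset_span ⟨k + k', fun i hi => ?_, rfl⟩)
    by_cases h : k i = 0
    · exact hk' i (by simpa [h] using hi)
    · exact hk i h
  have hone : (1 : A) ∈ Submodule.span K X :=
    Submodule.subset_span ⟨0, fun _ h => absurd rfl h, (orderedMonomial_zero x).symm⟩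
  let B : Subalgebra K A := (Submodule.span K X).toSubalgebra hone fun a b ha hb => hmul a ha b hb
  refine Algebra.adjoin_le (S := B) ?_ hz
  rintro _ ⟨i, hi, rfl⟩
  refine Submodule.subset_span ⟨Pi.single i 1, fun j hj => ?_, ?_⟩
  · obtain rfl : j = i := by by_contra h; exact hj (Pi.single_eq_of_ne h 1)
    exact hi
  · rw [orderedMonomial_single, pow_one]

theorem orderedMonomial_mul_mul_mem_iff {S : Type*} [SetLike S A] [NegMemClass S A] {s : S}
    (x : Fin n → A) (hanti : ∀ i j, i ≠ j → x i * x j = -(x j * x i))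
    (k k' : Fin n → ℕ) (q : A) :
    orderedMonomial x k * (orderedMonomial x k' * q) ∈ s ↔
      orderedMonomial x (k + k') * q ∈ s := by
  rw [← mul_assoc]
  exact ((orderedMonomial_mul x hanti k k').mul_right q).mem_iff

end Monomial

theorem Submodule.mul_mul_mem_of_mem_span {K A : Type*} [CommSemiring K] [Semiring A]
    [Algebra K A]
    {X : Set A} {S : Submodule K A} (p q : A) (h : ∀ a ∈ X, p * (a * q) ∈ S) {z : A}
    (hz : z ∈ Submodule.span K X) : p * (z * q) ∈ S :=
  (Submodule.span_le (p := S.comap (LinearMap.mulLeft K p ∘ₗ LinearMap.mulRight K q))).mpr h hz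

section Spanning

open Equiv

variable {K A : Type*} [CommRing K] [Ring A] [Algebra K A] {n : ℕ} {x : Fin n → A}
  {T : Perm (Fin n) → A} {len : Perm (Fin n) → ℕ} {S : Submodule K A}

theorem orderedMonomial_mul_mem_of_rewrite (hanti : ∀ i j, i ≠ j → x i * x j = -(x j * x i))
    (hmul : ∀ v w, v ≠ 1 → T v * T w = 0 ∨ ∃ w', len w < len w' ∧ T v * T w =± T w')
    {m : Fin n} {e : ℕ} {c : ℕ → A} {f : Perm (Fin n) → A}
    (hc : ∀ d, c d ∈ Algebra.adjoin K {a | ∃ i, i < m ∧ a = x i})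
    (hf : ∀ v, f v ∈ Algebra.adjoin K {a | ∃ i, i ≤ m ∧ a = x i})
    (hrel : x m ^ e = (∑ d ∈ Finset.range e, c d * x m ^ d) +
      ∑ v ∈ Finset.univ.filter (· ≠ 1), f v * T v)
    {t : Fin n → ℕ} {w : Perm (Fin n)} (ht : e ≤ t m)
    (hlower : ∀ k, k m < t m → (∀ j, m < j → k j = t j) → orderedMonomial x k * T w ∈ S)
    (hlonger : ∀ k w', len w < len w' → (∀ j, m < j → k j = t j) →
      orderedMonomial x k * T w' ∈ S) :
    orderedMonomial x t * T w ∈ S := by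
  classical
  set t' := t - Pi.single m e
  have hsplit : t = t' + Pi.single m e := by
    ext j; rcases eq_or_ne j m with rfl | hj <;> simp [t', *]
  rw [hsplit, ← orderedMonomial_mul_mul_mem_iff x hanti, orderedMonomial_single, hrel]
  simp only [add_mul, mul_add, Finset.sum_mul, Finset.mul_sum, mul_assoc]
  refine add_mem (Submodule.sum_mem _ fun d hd => ?_) (Submodule.sum_mem _ fun v hv => ?_)
  · refine Submodule.mul_mul_mem_of_mem_span _ _ ?_
      (mem_span_orderedMonomial_of_mem_adjoin x hanti _ (hc d))
    rintro _ ⟨a, ha, rfl⟩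
    rw [← orderedMonomial_single x m d, orderedMonomial_mul_mul_mem_iff x hanti,
      orderedMonomial_mul_mul_mem_iff x hanti]
    apply hlower
    · have ham : a m = 0 := by_contra fun h => lt_irrefl m (ha m h)
      simp only [Finset.mem_range] at hd
      simp [t', ham]
      omega
    · intro j hj
      have haj : a j = 0 := by_contra fun h => lt_asymm hj (ha j h)
      simp [t', hj.ne', haj]
  · rcases hmul v w (Finset.mem_filter.mp hv).2 with h0 | ⟨w', hlt, hw'⟩
    · rw [h0, mul_zero, mul_zero]
      exact zero_mem _
    refine Submodule.mul_mul_mem_of_mem_span _ _ ?_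
      (mem_span_orderedMonomial_of_mem_adjoin x hanti _ (hf v))
    rintro _ ⟨a, ha, rfl⟩
    rw [orderedMonomial_mul_mul_mem_iff x hanti, (hw'.mul_left _).mem_iff]
    refine hlonger _ w' hlt fun j hj => ?_
    have haj : a j = 0 := by_contra fun h => not_le.mpr hj (ha j h)
    simp [t', hj.ne', haj]

theorem orderedMonomial_mul_mem_of_restricted_above
    (hanti : ∀ i j, i ≠ j → x i * x j = -(x j * x i))
    (hmul : ∀ v w, v ≠ 1 → T v * T w = 0 ∨ ∃ w', len w < len w' ∧ T v * T w =± T w')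
    {ℓ : ℕ} {m : Fin n} {c : ℕ → A} {f : Perm (Fin n) → A}
    (hc : ∀ d, c d ∈ Algebra.adjoin K {a | ∃ i, i < m ∧ a = x i})
    (hf : ∀ v, f v ∈ Algebra.adjoin K {a | ∃ i, i ≤ m ∧ a = x i})
    (hrel : x m ^ (ℓ - m) = (∑ d ∈ Finset.range (ℓ - m), c d * x m ^ d) +
      ∑ v ∈ Finset.univ.filter (· ≠ 1), f v * T v)
    (hprev : ∀ t w, (∀ j, m ≤ j → t j < ℓ - j) → orderedMonomial x t * T w ∈ S)
    (t : Fin n → ℕ) (w : Perm (Fin n)) (ht : ∀ j, m < j → t j < ℓ - j) :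
    orderedMonomial x t * T w ∈ S := by
  set L := Finset.univ.sup len
  induction hN : L - len w using Nat.strong_induction_on generalizing t w with
  | _ N ihN =>
  induction hs : t m using Nat.strong_induction_on generalizing t with
  | _ s ihs =>
  by_cases hsm : t m < ℓ - m
  · exact hprev t w fun j hj => (eq_or_lt_of_le hj).elim (fun h => h ▸ hsm) (ht j)
  refine orderedMonomial_mul_mem_of_rewrite hanti hmul hc hf hrel (not_lt.mp hsm) ?_ ?_
  · intro k hk hkt
    exact ihs (k m) (hs ▸ hk) k (fun j hj => hkt j hj ▸ ht j hj) rfl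
  · intro k w' hlt hkt
    have := Finset.le_sup (f := len) (Finset.mem_univ w')
    exact ihN (L - len w') (by omega) k w' (fun j hj => hkt j hj ▸ ht j hj) rfl

theorem orderedMonomial_mul_mem_of_rewrite_relations
    (hanti : ∀ i j, i ≠ j → x i * x j = -(x j * x i))
    (hmul : ∀ v w, v ≠ 1 → T v * T w = 0 ∨ ∃ w', len w < len w' ∧ T v * T w =± T w')
    {ℓ : ℕ} (hrw : ∀ m : Fin n, ∃ (c : ℕ → A) (f : Perm (Fin n) → A),
      (∀ d, c d ∈ Algebra.adjoin K {a | ∃ i, i < m ∧ a = x i}) ∧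
      (∀ v, f v ∈ Algebra.adjoin K {a | ∃ i, i ≤ m ∧ a = x i}) ∧
      x m ^ (ℓ - m) = (∑ d ∈ Finset.range (ℓ - m), c d * x m ^ d) +
        ∑ v ∈ Finset.univ.filter (· ≠ 1), f v * T v)
    (hS : ∀ k v, (∀ i : Fin n, k i < ℓ - i) → orderedMonomial x k * T v ∈ S)
    (t : Fin n → ℕ) (w : Perm (Fin n)) : orderedMonomial x t * T w ∈ S := by
  suffices h : ∀ m : ℕ, ∀ t w, (∀ j : Fin n, m ≤ (j : ℕ) → t j < ℓ - j) →
      orderedMonomial x t * T w ∈ S from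
    h n t w fun j hj => absurd j.isLt (not_lt.mpr hj)
  intro m
  induction m with
  | zero => exact fun t w ht => hS t w fun i => ht i i.val.zero_le
  | succ m ih =>
    by_cases hm : m < n
    · obtain ⟨c, f, hc, hf, hrel⟩ := hrw ⟨m, hm⟩
      exact orderedMonomial_mul_mem_of_restricted_above hanti hmul hc hf hrel ih
    · exact fun t w _ => ih t w fun j hj => absurd j.isLt (by omega)

end Spanning

theorem stmt_17_general {K A : Type*} [Field K] [Ring A] [Algebra K A] (n ℓ : ℕ)
    (x : Fin n → A) (T : Equiv.Perm (Fin n) → A) (len : Equiv.Perm (Fin n) → ℕ)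
    (hanti : ∀ i j : Fin n, i ≠ j → x i * x j = -(x j * x i))
    (hmul : ∀ v w : Equiv.Perm (Fin n), v ≠ 1 →
      T v * T w = 0 ∨ ∃ w', len w < len w' ∧ (T v * T w = T w' ∨ T v * T w = -T w'))
    (hrw : ∀ m : Fin n, ∃ (c : ℕ → A) (f : Equiv.Perm (Fin n) → A),
      (∀ d, c d ∈ Algebra.adjoin K {a : A | ∃ i : Fin n, i < m ∧ a = x i}) ∧
      (∀ v, f v ∈ Algebra.adjoin K {a : A | ∃ i : Fin n, i ≤ m ∧ a = x i}) ∧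
      x m ^ (ℓ - (m : ℕ)) =
        (∑ dd ∈ Finset.range (ℓ - (m : ℕ)), c dd * x m ^ dd) +
          ∑ v ∈ Finset.univ.filter (fun v => v ≠ 1), f v * T v) :
    ∀ (t : Fin n → ℕ) (w : Equiv.Perm (Fin n)),
      (List.ofFn fun i => x i ^ t i).prod * T w ∈
        Submodule.span K {a : A | ∃ (kk : Fin n → ℕ) (v : Equiv.Perm (Fin n)),
          (∀ i, kk i < ℓ - (i : ℕ)) ∧
          a = (List.ofFn fun i => x i ^ kk i).prod * T v} :=
  orderedMonomial_mul_mem_of_rewrite_relations hanti hmul hrw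
    fun k v hk => Submodule.subset_span ⟨k, v, hk, rfl⟩

/-- the spanning claim for `ONH_n^ℓ` (zero-based indexing: position
`i : Fin n` corresponds to the paper's `i+1`, so the restricted exponents are
`k_i < ℓ - i` and the rewriting relation expresses `x_i^{ℓ-i}`). Given:
(b) rewriting relations `x_m^{ℓ-m} = Σ_{d<ℓ-m} c_d x_m^d + Σ_{v≠1} f_{m,v} T v` with
`c_d` in the subalgebra generated by `x_j, j < m` and `f_{m,v}` in the subalgebra
generated by `x_j, j ≤ m`;
(c) `T v * T w ∈ {0, ±T w'}` with `len w' > len w` whenever `v ≠ 1`;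
and the anticommutation of the `x`'s: then every element `x_0^{t_0}⋯x_{n-1}^{t_{n-1}} T w`
lies in the `K`-span of the restricted monomials `x_0^{k_0}⋯x_{n-1}^{k_{n-1}} T v`
with `k_i < ℓ - i`. -/
theorem stmt_17 {K A : Type*} [Field K] [Ring A] [Algebra K A] (n ℓ : ℕ)
    (x : Fin n → A) (T : Equiv.Perm (Fin n) → A) (len : Equiv.Perm (Fin n) → ℕ)
    (hT1 : T 1 = 1)
    (hanti : ∀ i j : Fin n, i ≠ j → x i * x j = -(x j * x i))
    (hmul : ∀ v w : Equiv.Perm (Fin n), v ≠ 1 →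
      T v * T w = 0 ∨ ∃ w', len w < len w' ∧ (T v * T w = T w' ∨ T v * T w = -T w'))
    (hrw : ∀ m : Fin n, ∃ (c : ℕ → A) (f : Equiv.Perm (Fin n) → A),
      (∀ d, c d ∈ Algebra.adjoin K {a : A | ∃ i : Fin n, i < m ∧ a = x i}) ∧
      (∀ v, f v ∈ Algebra.adjoin K {a : A | ∃ i : Fin n, i ≤ m ∧ a = x i}) ∧
      x m ^ (ℓ - (m : ℕ)) =
        (∑ dd ∈ Finset.range (ℓ - (m : ℕ)), c dd * x m ^ dd) +
          ∑ v ∈ Finset.univ.filter (fun v => v ≠ 1), f v * T v) :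
    ∀ (t : Fin n → ℕ) (w : Equiv.Perm (Fin n)),
      (List.ofFn fun i => x i ^ t i).prod * T w ∈
        Submodule.span K {a : A | ∃ (kk : Fin n → ℕ) (v : Equiv.Perm (Fin n)),
          (∀ i, kk i < ℓ - (i : ℕ)) ∧
          a = (List.ofFn fun i => x i ^ kk i).prod * T v} :=
  stmt_17_general n ℓ x T len hanti hmul hrw
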